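/- Let u : ℂ⁷ → ℂ⁷ be the unipotent linear automorphism given by the block-diagonal matrix J(3)⊕J(2)⊕J(2) (Jordan blocks of sizes 3, 2, 2 with eigenvalue 1), and let Λ³u be the induced automorphism of the third exterior power Λ³(ℂ⁷). Then the fixed subspace {ω ∈ Λ³(ℂ⁷) : (Λ³u)ω = ω} has dimension 13. -/

import Mathlib

open Matrix

noncomputable section

/-- `ℂ⁷`. -/
abbrev V7 : Type := Fin 7 → ℂ

/-- The 7×7 matrix with diagonal `d` and superdiagonal `s` (entry `(i, i+1)` is `s i`). -/
def bidiag (d s : Fin 7 → ℂ) : Matrix (Fin 7) (Fin 7) ℂ :=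
  Matrix.of fun i j => if j = i then d i else if (j : ℕ) = (i : ℕ) + 1 then s i else 0

/-- The endomorphism of the exterior algebra of `ℂ⁷` induced by the matrix `X`. -/
def extMap (X : Matrix (Fin 7) (Fin 7) ℂ) :
    ExteriorAlgebra ℂ V7 →ₗ[ℂ] ExteriorAlgebra ℂ V7 :=
  (ExteriorAlgebra.map (Matrix.toLin' X)).toLinearMap

/-- The fixed subspace `{ω ∈ Λ³(ℂ⁷) : (Λ³X)ω = ω}` of the automorphism of the third
exterior power `Λ³(ℂ⁷)` induced by the matrix `X`. -/
def lam3Fixed (X : Matrix (Fin 7) (Fin 7) ℂ) : Submodule ℂ (ExteriorAlgebra ℂ V7) :=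
  ⋀[ℂ]^3 V7 ⊓ LinearMap.ker (extMap X - LinearMap.id)

namespace Lam3
open ExteriorAlgebra

def E : Fin 7 → V7 := fun i j => if i = j then 1 else 0

def tri : Fin 35 → Fin 3 → Fin 7 :=
![![0, 1, 2], ![0, 1, 3], ![0, 1, 4], ![0, 1, 5], ![0, 1, 6], ![0, 2, 3], ![0, 2, 4],
  ![0, 2, 5], ![0, 2, 6], ![0, 3, 4], ![0, 3, 5], ![0, 3, 6], ![0, 4, 5], ![0, 4, 6],
  ![0, 5, 6], ![1, 2, 3], ![1, 2, 4], ![1, 2, 5], ![1, 2, 6], ![1, 3, 4], ![1, 3, 5],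
  ![1, 3, 6], ![1, 4, 5], ![1, 4, 6], ![1, 5, 6], ![2, 3, 4], ![2, 3, 5], ![2, 3, 6],
  ![2, 4, 5], ![2, 4, 6], ![2, 5, 6], ![3, 4, 5], ![3, 4, 6], ![3, 5, 6], ![4, 5, 6]]

def w : Fin 35 → ExteriorAlgebra ℂ V7 := fun k => ιMulti ℂ 3 fun s => E (tri k s)

def det3 {R : Type*} [CommRing R] (m : Fin 3 → Fin 3 → R) : R :=
  m 0 0 * m 1 1 * m 2 2 - m 0 0 * m 1 2 * m 2 1 - m 0 1 * m 1 0 * m 2 2 +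
    m 0 1 * m 1 2 * m 2 0 + m 0 2 * m 1 0 * m 2 1 - m 0 2 * m 1 1 * m 2 0

lemma det_of_eq_det3 (m : Fin 3 → Fin 3 → ℂ) : Matrix.det (Matrix.of m) = det3 m :=
  Matrix.det_fin_three _

lemma det3_cast (m : Fin 3 → Fin 3 → ℤ) :
    ((det3 m : ℤ) : ℂ) = det3 fun i j => ((m i j : ℤ) : ℂ) := by
  simp [det3]

/-- the coefficient functional attached to `p : Fin 3 → Fin 7`. -/
def lam (p : Fin 3 → Fin 7) : ExteriorAlgebra ℂ V7 →ₗ[ℂ] ℂ :=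
  liftAlternating fun i => match i with
    | 3 => (Matrix.detRowAlternating : (Fin 3 → ℂ) [⋀^Fin 3]→ₗ[ℂ] ℂ).compLinearMap
        (LinearMap.funLeft ℂ ℂ p)
    | _ => 0

lemma lam_ιMulti (p : Fin 3 → Fin 7) (v : Fin 3 → V7) :
    lam p (ιMulti ℂ 3 v) = det3 fun s b => v s (p b) := by
  rw [lam, liftAlternating_apply_ιMulti]
  exact det_of_eq_det3 _


def Xz : Matrix (Fin 7) (Fin 7) ℤ :=
  Matrix.of fun i j => if j = i then 1 else if (j : ℕ) = (i : ℕ) + 1 then ![1,1,0,1,0,1,0] i else 0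

abbrev Xc : Matrix (Fin 7) (Fin 7) ℂ := bidiag 1 ![1, 1, 0, 1, 0, 1, 0]

lemma hX (i j : Fin 7) : Xc i j = ((Xz i j : ℤ) : ℂ) := by
  show (bidiag 1 ![1, 1, 0, 1, 0, 1, 0]) i j = _
  unfold bidiag Xz
  by_cases h1 : j = i
  · simp [h1]
  · by_cases h2 : (j : ℕ) = (i : ℕ) + 1
    · simp only [Matrix.of_apply, h1, h2, if_true, if_false]
      fin_cases i <;> norm_num
    · simp [h1, h2]

lemma hU (j : Fin 7) : Matrix.toLin' Xc (E j) = fun i => ((Xz i j : ℤ) : ℂ) := by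
  funext i
  rw [Matrix.toLin'_apply]
  rw [show (Xc *ᵥ E j) i = ∑ m, Xc i m * E j m from rfl]
  simp only [E, mul_ite, mul_one, mul_zero]
  rw [Finset.sum_ite_eq Finset.univ j (fun m => Xc i m)]
  simp [hX]

/-- integer matrix of `Λ³u - 1` in the wedge basis, evaluated through the functionals. -/
def NZ : Fin 35 → Fin 35 → ℤ := fun k l =>
  det3 (fun s b => Xz (tri k b) (tri l s)) - (if k = l then 1 else 0)

lemma lam_w (k l : Fin 35) : lam (tri k) (w l) = if k = l then 1 else 0 := by
  rw [w, lam_ιMulti]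
  have h1 : (det3 fun s b => E (tri l s) (tri k b)) =
      ((det3 (fun s b => if tri l s = tri k b then (1:ℤ) else 0) : ℤ) : ℂ) := by
    rw [det3_cast]
    congr 1; funext s b
    by_cases h : tri l s = tri k b <;> simp [E, h]
  have h2 : (det3 (fun s b => if tri l s = tri k b then (1:ℤ) else 0)) =
      (if k = l then 1 else 0 : ℤ) := by
    clear h1; revert k l; decide
  rw [h1, h2]
  by_cases h : k = l <;> simp [h]

lemma lam_ext_w (k l : Fin 35) :
    lam (tri k) (extMap Xc (w l)) = ((det3 (fun s b => Xz (tri k b) (tri l s)) : ℤ) : ℂ) := by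
  rw [w, extMap]
  rw [show (ExteriorAlgebra.map (Matrix.toLin' Xc)).toLinearMap (ιMulti ℂ 3 fun s => E (tri l s))
      = ιMulti ℂ 3 (Matrix.toLin' Xc ∘ fun s => E (tri l s)) from
        map_apply_ιMulti (Matrix.toLin' Xc) (fun s => E (tri l s))]
  rw [lam_ιMulti, det3_cast]
  congr 1; funext s b
  simp only [Function.comp_apply, hU]

lemma lam_T_w (k l : Fin 35) :
    lam (tri k) ((extMap Xc - (LinearMap.id : ExteriorAlgebra ℂ V7 →ₗ[ℂ] ExteriorAlgebra ℂ V7)) (w l))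
      = ((NZ k l : ℤ) : ℂ) := by
  rw [LinearMap.sub_apply, LinearMap.id_apply, map_sub, lam_ext_w, lam_w, NZ]
  by_cases h : k = l <;> simp [h] <;> push_cast <;> ring

set_option maxRecDepth 40000 in
lemma sorted_mem (q : Fin 3 → Fin 7) (h1 : q 0 < q 1) (h2 : q 1 < q 2) :
    ιMulti ℂ 3 (fun s => E (q s)) ∈ Submodule.span ℂ (Set.range w) := by
  have hex : ∀ q : Fin 3 → Fin 7, q 0 < q 1 → q 1 < q 2 → ∃ k, ∀ s, tri k s = q s := by decide
  obtain ⟨k, hk⟩ := hex q h1 h2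
  have hw : w k = ιMulti ℂ 3 (fun s => E (q s)) := by
    unfold w; congr 1; funext s; rw [hk]
  exact hw ▸ Submodule.subset_span ⟨k, rfl⟩

lemma zero_case {r : Fin 3 → Fin 7} {i j : Fin 3} (hij : i ≠ j) (h : r i = r j) :
    ιMulti ℂ 3 (fun s => E (r s)) ∈ Submodule.span ℂ (Set.range w) := by
  rw [AlternatingMap.map_eq_zero_of_eq _ (fun s => E (r s))
    (show E (r i) = E (r j) by rw [h]) hij]
  exact zero_mem _

lemma mono_mem (r : Fin 3 → Fin 7) :
    ιMulti ℂ 3 (fun s => E (r s)) ∈ Submodule.span ℂ (Set.range w) := by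
  rcases lt_trichotomy (r 0) (r 1) with h01 | h01 | h01
  · rcases lt_trichotomy (r 1) (r 2) with h12 | h12 | h12
    · exact sorted_mem r h01 h12
    · exact zero_case (show (1:Fin 3) ≠ 2 by decide) h12
    · rcases lt_trichotomy (r 0) (r 2) with h02 | h02 | h02
      · -- r0 < r2 < r1 : q = ![r 0, r 2, r 1], swap 1 2
        have e : (fun s => E (r s)) = (fun s => E (![r 0, r 2, r 1] s)) ∘ Equiv.swap 1 2 := by
          funext s; fin_cases s <;> simp [Equiv.swap_apply_def]
        rw [e, AlternatingMap.map_swap _ _ (show (1:Fin 3) ≠ 2 by decide)]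
        exact neg_mem (sorted_mem _ h02 h12)
      · exact zero_case (show (0:Fin 3) ≠ 2 by decide) h02
      · -- r2 < r0 < r1 : q = ![r 2, r 0, r 1]
        have e : (fun s => E (r s)) =
            ((fun s => E (![r 2, r 0, r 1] s)) ∘ Equiv.swap 0 1) ∘ Equiv.swap 1 2 := by
          funext s; fin_cases s <;> simp [Equiv.swap_apply_def]
        rw [e, AlternatingMap.map_swap _ _ (show (1:Fin 3) ≠ 2 by decide),
          AlternatingMap.map_swap _ _ (show (0:Fin 3) ≠ 1 by decide), neg_neg]
        exact sorted_mem _ h02 h01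
  · exact zero_case (show (0:Fin 3) ≠ 1 by decide) h01
  · rcases lt_trichotomy (r 0) (r 2) with h02 | h02 | h02
    · -- r1 < r0 < r2 : q = ![r 1, r 0, r 2], swap 0 1
      have e : (fun s => E (r s)) = (fun s => E (![r 1, r 0, r 2] s)) ∘ Equiv.swap 0 1 := by
        funext s; fin_cases s <;> simp [Equiv.swap_apply_def]
      rw [e, AlternatingMap.map_swap _ _ (show (0:Fin 3) ≠ 1 by decide)]
      exact neg_mem (sorted_mem _ h01 h02)
    · exact zero_case (show (0:Fin 3) ≠ 2 by decide) h02
    · rcases lt_trichotomy (r 1) (r 2) with h12 | h12 | h12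
      · -- r1 < r2 < r0 : q = ![r 1, r 2, r 0]
        have e : (fun s => E (r s)) =
            ((fun s => E (![r 1, r 2, r 0] s)) ∘ Equiv.swap 0 1) ∘ Equiv.swap 0 2 := by
          funext s; fin_cases s <;> simp [Equiv.swap_apply_def]
        rw [e, AlternatingMap.map_swap _ _ (show (0:Fin 3) ≠ 2 by decide),
          AlternatingMap.map_swap _ _ (show (0:Fin 3) ≠ 1 by decide), neg_neg]
        exact sorted_mem _ h12 h02
      · exact zero_case (show (1:Fin 3) ≠ 2 by decide) h12
      · -- r2 < r1 < r0 : q = ![r 2, r 1, r 0], swap 0 2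
        have e : (fun s => E (r s)) = (fun s => E (![r 2, r 1, r 0] s)) ∘ Equiv.swap 0 2 := by
          funext s; fin_cases s <;> simp [Equiv.swap_apply_def]
        rw [e, AlternatingMap.map_swap _ _ (show (0:Fin 3) ≠ 2 by decide)]
        exact neg_mem (sorted_mem _ h12 h01)

lemma exp_mem (v : Fin 3 → V7) : ιMulti ℂ 3 v ∈ Submodule.span ℂ (Set.range w) := by
  have hv : v = fun s => ∑ j : Fin 7, v s j • E j := by
    funext s; exact pi_eq_sum_univ (v s)
  have expand := MultilinearMap.map_sum (ιMulti ℂ 3).toMultilinearMap (fun s j => v s j • E j)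
  rw [show ιMulti ℂ 3 v = (ιMulti ℂ 3).toMultilinearMap v from rfl, hv]
  rw [expand]
  refine Submodule.sum_mem _ fun r _ => ?_
  rw [show ((ιMulti ℂ 3).toMultilinearMap fun s => v s (r s) • E (r s)) =
      (∏ s, v s (r s)) • (ιMulti ℂ 3).toMultilinearMap (fun s => E (r s)) from
    MultilinearMap.map_smul_univ _ _ _]
  exact Submodule.smul_mem _ _ (mono_mem r)

lemma hspan : ⋀[ℂ]^3 V7 = Submodule.span ℂ (Set.range w) := by
  refine le_antisymm ?_ ?_
  · rw [← ιMulti_span_fixedDegree]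
    refine Submodule.span_le.2 ?_
    rintro x ⟨v, rfl⟩
    exact exp_mem v
  · refine Submodule.span_le.2 ?_
    rintro x ⟨k, rfl⟩
    exact ιMulti_range ℂ 3 ⟨_, rfl⟩

def KZ : Fin 35 → Fin 13 → ℤ :=
![![1, 0, 0, 0, 0, 0, 0, 0, 0, 0, 0, 0, 0],
 ![0, 1, 0, 0, 0, 0, 0, 0, 0, 0, 0, 0, 0],
 ![0, 0, 0, -1, 0, 0, 0, 0, 0, 0, 0, 0, 0],
 ![0, 0, 1, 0, 0, 0, 0, 0, 0, 0, 0, 0, 0],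
 ![0, 0, 0, 0, -1, 0, 0, 0, 0, 0, 0, 0, 0],
 ![0, 0, 0, 1, 0, 0, 0, 0, 0, 0, 0, 0, 0],
 ![0, 0, 0, 0, 0, 0, 0, 0, 0, 0, 0, 0, 0],
 ![0, 0, 0, 0, 1, 0, 0, 0, 0, 0, 0, 0, 0],
 ![0, 0, 0, 0, 0, 0, 0, 0, 0, 0, 0, 0, 0],
 ![0, 0, 0, 0, 0, 1, 0, 0, 0, 0, 0, 0, 0],
 ![0, 0, 0, 0, 0, 0, 1, 0, 0, 0, 0, 0, 0],
 ![0, 0, 0, 0, 0, 0, 0, -1, 0, -1, 1, 0, 0],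
 ![0, 0, 0, 0, 0, 0, 0, 1, 0, 0, 0, 0, 0],
 ![0, 0, 0, 0, 0, 0, 0, 0, 0, 0, 1, 0, 0],
 ![0, 0, 0, 0, 0, 0, 0, 0, 1, 0, 0, 0, 0],
 ![0, 0, 0, 0, 0, 0, 0, 0, 0, 0, 0, 0, 0],
 ![0, 0, 0, 0, 0, 0, 0, 0, 0, 0, 0, 0, 0],
 ![0, 0, 0, 0, 0, 0, 0, 0, 0, 0, 0, 0, 0],
 ![0, 0, 0, 0, 0, 0, 0, 0, 0, 0, 0, 0, 0],
 ![0, 0, 0, 0, 0, 0, 0, 0, 0, 0, 0, 0, 0],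
 ![0, 0, 0, 0, 0, 0, 0, 0, 0, 1, 0, 0, 0],
 ![0, 0, 0, 0, 0, 0, 0, 0, 0, 0, -1, 0, 0],
 ![0, 0, 0, 0, 0, 0, 0, 0, 0, 0, -1, 0, 0],
 ![0, 0, 0, 0, 0, 0, 0, 0, 0, 0, 0, 0, 0],
 ![0, 0, 0, 0, 0, 0, 0, 0, 0, 0, 0, 0, 0],
 ![0, 0, 0, 0, 0, 0, 0, 0, 0, 0, 0, 0, 0],
 ![0, 0, 0, 0, 0, 0, 0, 0, 0, 0, 2, 0, 0],
 ![0, 0, 0, 0, 0, 0, 0, 0, 0, 0, 0, 0, 0],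
 ![0, 0, 0, 0, 0, 0, 0, 0, 0, 0, 0, 0, 0],
 ![0, 0, 0, 0, 0, 0, 0, 0, 0, 0, 0, 0, 0],
 ![0, 0, 0, 0, 0, 0, 0, 0, 0, 0, 0, 0, 0],
 ![0, 0, 0, 0, 0, 0, 0, 0, 0, 0, 0, 1, 0],
 ![0, 0, 0, 0, 0, 0, 0, 0, 0, 0, 0, 0, 0],
 ![0, 0, 0, 0, 0, 0, 0, 0, 0, 0, 0, 0, 1],
 ![0, 0, 0, 0, 0, 0, 0, 0, 0, 0, 0, 0, 0]]

def CZ : Fin 22 → Fin 35 → ℤ :=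
![![0, 1, 0, 0, 0, -1, 0, 0, 0, 0, 0, 0, 0, 0, 0, 0, 0, 0, 0, 0, 0, 0, 0, 0, 0, 0, 0, 0, 0, 0, 0, 0, 0, 0, 0],
 ![0, 0, 0, 1, 0, 0, 0, -1, 0, 0, 0, 0, 0, 0, 0, 0, 0, 0, 0, 0, 0, 0, 0, 0, 0, 0, 0, 0, 0, 0, 0, 0, 0, 0, 0],
 ![0, 0, 1, 0, 0, 0, -1, 0, 0, 0, 0, 0, 0, 0, 0, 0, 0, 0, 0, 0, 0, 0, 0, 0, 0, 0, 0, 0, 0, 0, 0, 0, 0, 0, 0],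
 ![0, 0, 0, 0, 1, 0, 0, 0, -1, 0, 0, 0, 0, 0, 0, 0, 0, 0, 0, 0, 0, 0, 0, 0, 0, 0, 0, 0, 0, 0, 0, 0, 0, 0, 0],
 ![0, 0, 0, 0, 0, 0, 0, 0, 0, 0, 2, -1, -1, -1, 0, 0, 0, 0, 0, 0, -1, 1, 1, -1, 0, 0, 0, 0, 0, 0, 0, 0, 0, 0, 0],
 ![0, 0, 0, 0, 0, 0, 0, 0, 0, 0, 0, 1, 1, -3, 0, 0, 0, 0, 0, 0, -1, 1, 1, -1, 0, 0, 0, 0, 0, 0, 0, 0, 0, 0, 0],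
 ![0, 0, -1, 0, 0, 1, 0, 0, 0, 0, 0, 0, 0, 0, 0, 0, 0, 0, 0, 0, 0, 0, 0, 0, 0, 0, 0, 0, 0, 0, 0, 0, 0, 0, 0],
 ![0, 0, 0, 0, 0, 0, 1, 0, 0, 0, 0, 0, 0, 0, 0, 0, 0, 0, 0, 0, 0, 0, 0, 0, 0, 0, 0, 0, 0, 0, 0, 0, 0, 0, 0],
 ![0, 0, 0, 0, -1, 0, 0, 1, 0, 0, 0, 0, 0, 0, 0, 0, 0, 0, 0, 0, 0, 0, 0, 0, 0, 0, 0, 0, 0, 0, 0, 0, 0, 0, 0],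
 ![0, 0, 0, 0, 0, 0, 0, 0, 1, 0, 0, 0, 0, 0, 0, 0, 0, 0, 0, 0, 0, 0, 0, 0, 0, 0, 0, 0, 0, 0, 0, 0, 0, 0, 0],
 ![0, 0, 0, 0, 0, 0, 0, 0, 0, 1, 0, 0, 0, 0, 0, 0, 0, 0, 0, 0, 0, 0, 0, 0, 0, 0, 0, 0, 0, 0, 0, 0, 0, 0, 0],
 ![0, 0, 0, 0, 0, 0, 0, 0, 0, 0, 0, 1, -1, 1, 0, 0, 0, 0, 0, 0, 1, -1, -1, 1, 0, 0, 0, 0, 0, 0, 0, 0, 0, 0, 0],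
 ![0, 0, 0, 0, 0, 0, 0, 0, 0, 0, 0, -1, 1, 1, 0, 0, 0, 0, 0, 0, 1, -1, -1, 1, 0, 0, 0, 0, 0, 0, 0, 0, 0, 0, 0],
 ![0, 0, 0, 0, 0, 0, 0, 0, 0, 0, 0, 0, 0, 1, 0, 0, 0, 0, 0, 0, 0, 0, 0, 0, 0, 0, 0, 0, 0, 0, 0, 0, 0, 0, 0],
 ![0, 0, 0, 0, 0, 0, 0, 0, 0, 0, 0, 0, 0, 0, 1, 0, 0, 0, 0, 0, 0, 0, 0, 0, 0, 0, 0, 0, 0, 0, 0, 0, 0, 0, 0],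
 ![0, 0, 0, 0, 0, 0, 0, 0, 0, 0, 0, 0, 0, 0, 0, 0, 0, 0, 0, 1, 0, 0, 0, 0, 0, 0, 0, 0, 0, 0, 0, 0, 0, 0, 0],
 ![0, 0, 0, 0, 0, 0, 0, 0, 0, 0, 0, 0, 0, -1, 0, 0, 0, 0, 0, 0, 0, 1, 0, -1, 0, 0, 0, 0, 0, 0, 0, 0, 0, 0, 0],
 ![0, 0, 0, 0, 0, 0, 0, 0, 0, 0, 0, 0, 0, -1, 0, 0, 0, 0, 0, 0, 0, 0, 1, -1, 0, 0, 0, 0, 0, 0, 0, 0, 0, 0, 0],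
 ![0, 0, 0, 0, 0, 0, 0, 0, 0, 0, 0, 0, 0, 0, 0, 0, 0, 0, 0, 0, 0, 0, 0, 1, 0, 0, 0, 0, 0, 0, 0, 0, 0, 0, 0],
 ![0, 0, 0, 0, 0, 0, 0, 0, 0, 0, 0, 0, 0, 0, 0, 0, 0, 0, 0, 0, 0, 0, 0, 0, 1, 0, 0, 0, 0, 0, 0, 0, 0, 0, 0],
 ![0, 0, 0, 0, 0, 0, 0, 0, 0, 0, 0, 0, 0, 0, 0, 0, 0, 0, 0, 0, 0, 0, 0, 0, 0, 0, 0, 0, 0, 0, 0, 1, 0, 0, 0],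
 ![0, 0, 0, 0, 0, 0, 0, 0, 0, 0, 0, 0, 0, 0, 0, 0, 0, 0, 0, 0, 0, 0, 0, 0, 0, 0, 0, 0, 0, 0, 0, 0, 0, 1, 0]]

def Jsel : Fin 22 → Fin 35 := ![2, 4, 6, 8, 11, 13, 15, 16, 17, 18, 19, 21, 22, 23, 24, 25, 27, 28, 29, 30, 32, 34]

def Dsel : Fin 13 → Fin 35 := ![0, 1, 3, 5, 7, 9, 10, 12, 14, 20, 26, 31, 33]

def md : Fin 13 → ℤ := ![1, 1, 1, 1, 1, 1, 1, 1, 1, 1, 2, 1, 1]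

def mc : Fin 22 → ℤ := ![1, 1, 1, 1, 2, 2, 1, 1, 1, 1, 1, 2, 2, 1, 1, 1, 1, 1, 1, 1, 1, 1]

set_option maxRecDepth 100000 in
lemma hNK : ∀ (k : Fin 35) (i : Fin 13), ∑ l, KZ l i * NZ k l = 0 := by decide

set_option maxRecDepth 100000 in
lemma hDK : ∀ (j : Fin 13) (i : Fin 13), KZ (Dsel j) i = if i = j then md j else 0 := by decide

set_option maxRecDepth 100000 in
lemma hCN : ∀ (i : Fin 22) (j : Fin 22),
    ∑ k, CZ i k * NZ k (Jsel j) = if i = j then mc i else 0 := by decide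

lemma hmd : ∀ i, md i ≠ 0 := by decide
lemma hmc : ∀ i, mc i ≠ 0 := by decide

lemma coeff_eq (c : Fin 35 → ℂ) (k : Fin 35) : lam (tri k) (∑ l, c l • w l) = c k := by
  rw [map_sum]
  simp only [_root_.map_smul, lam_w, smul_eq_mul, mul_ite, mul_one, mul_zero]
  simpa using Finset.sum_ite_eq Finset.univ k c

lemma lin_indep_w : LinearIndependent ℂ w := by
  rw [Fintype.linearIndependent_iff]
  intro c hc k
  have := congrArg (lam (tri k)) hc
  rwa [coeff_eq, map_zero] at this

lemma span_inj {x : ExteriorAlgebra ℂ V7} (hx : x ∈ Submodule.span ℂ (Set.range w))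
    (h0 : ∀ k, lam (tri k) x = 0) : x = 0 := by
  obtain ⟨c, rfl⟩ := (Submodule.mem_span_range_iff_exists_fun ℂ).1 hx
  have hc : ∀ k, c k = 0 := fun k => by rw [← coeff_eq c k]; exact h0 k
  simp [hc]

lemma lam_z (i : Fin 13) (k : Fin 35) :
    lam (tri k) (∑ l, (KZ l i : ℂ) • w l) = ((KZ k i : ℤ) : ℂ) := coeff_eq _ k

/-- The operator `Λ³u - 1`. -/
def Tm : ExteriorAlgebra ℂ V7 →ₗ[ℂ] ExteriorAlgebra ℂ V7 :=
  extMap Xc - (LinearMap.id : ExteriorAlgebra ℂ V7 →ₗ[ℂ] ExteriorAlgebra ℂ V7)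

lemma lam_Tm_w (k l : Fin 35) : lam (tri k) (Tm (w l)) = ((NZ k l : ℤ) : ℂ) := lam_T_w k l

/-- kernel vectors -/
def z : Fin 13 → ExteriorAlgebra ℂ V7 := fun i => ∑ l, ((KZ l i : ℤ) : ℂ) • w l

lemma lam_z' (i : Fin 13) (k : Fin 35) : lam (tri k) (z i) = ((KZ k i : ℤ) : ℂ) :=
  coeff_eq _ k

lemma z_mem (i : Fin 13) : z i ∈ Submodule.span ℂ (Set.range w) :=
  Submodule.sum_mem _ fun l _ => Submodule.smul_mem _ _ (Submodule.subset_span ⟨l, rfl⟩)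

lemma ext_w_mem (l : Fin 35) : extMap Xc (w l) ∈ ⋀[ℂ]^3 V7 := by
  have : extMap Xc (w l) = ιMulti ℂ 3 (Matrix.toLin' Xc ∘ fun s => E (tri l s)) :=
    map_apply_ιMulti (Matrix.toLin' Xc) (fun s => E (tri l s))
  rw [this]
  exact ιMulti_range ℂ 3 ⟨_, rfl⟩

lemma Tm_w_mem (l : Fin 35) : Tm (w l) ∈ Submodule.span ℂ (Set.range w) := by
  have h1 : extMap Xc (w l) ∈ Submodule.span ℂ (Set.range w) := by
    rw [← hspan]; exact ext_w_mem l
  have h2 : w l ∈ Submodule.span ℂ (Set.range w) := Submodule.subset_span ⟨l, rfl⟩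
  simpa [Tm] using sub_mem h1 h2

lemma Tm_z (i : Fin 13) : Tm (z i) = 0 := by
  have hmem : Tm (z i) ∈ Submodule.span ℂ (Set.range w) := by
    rw [z, map_sum]
    simp only [_root_.map_smul]
    exact Submodule.sum_mem _ fun l _ => Submodule.smul_mem _ _ (Tm_w_mem l)
  refine span_inj hmem fun k => ?_
  have h1 : lam (tri k) (Tm (z i)) = ∑ l, ((KZ l i : ℤ) : ℂ) * ((NZ k l : ℤ) : ℂ) := by
    rw [z, map_sum, map_sum]
    simp only [_root_.map_smul, smul_eq_mul, lam_Tm_w]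
  rw [h1]
  have h2 := hNK k i
  have : ((∑ l, KZ l i * NZ k l : ℤ) : ℂ) = 0 := by rw [h2]; norm_num
  push_cast at this
  exact this

lemma z_indep : LinearIndependent ℂ z := by
  rw [Fintype.linearIndependent_iff]
  intro c hc j
  have h := congrArg (lam (tri (Dsel j))) hc
  rw [map_sum, map_zero] at h
  simp only [_root_.map_smul, lam_z', smul_eq_mul] at h
  have hval : ∀ i, ((KZ (Dsel j) i : ℤ) : ℂ) = if i = j then ((md j : ℤ) : ℂ) else 0 := by
    intro i
    rw [hDK j i]
    by_cases hij : i = j <;> simp [hij]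
  rw [Finset.sum_congr rfl fun i _ => by rw [hval i]] at h
  simp only [mul_ite, mul_zero] at h
  rw [Finset.sum_ite_eq' Finset.univ j (fun i => c i * ((md j : ℤ) : ℂ))] at h
  simp only [Finset.mem_univ, if_true, mul_eq_zero] at h
  rcases h with h | h
  · exact h
  · exact absurd h (by exact_mod_cast hmd j)

/-- image vectors -/
def y : Fin 22 → ExteriorAlgebra ℂ V7 := fun j => Tm (w (Jsel j))

lemma y_indep : LinearIndependent ℂ y := by
  rw [Fintype.linearIndependent_iff]
  intro c hc i
  have hg : ∀ k, ∑ j, c j * ((NZ k (Jsel j) : ℤ) : ℂ) = 0 := by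
    intro k
    have h := congrArg (lam (tri k)) hc
    rw [map_sum, map_zero] at h
    simpa only [y, _root_.map_smul, lam_Tm_w, smul_eq_mul] using h
  have key : ∑ k, ((CZ i k : ℤ) : ℂ) * (∑ j, c j * ((NZ k (Jsel j) : ℤ) : ℂ)) =
      c i * ((mc i : ℤ) : ℂ) := by
    calc ∑ k, ((CZ i k : ℤ) : ℂ) * (∑ j, c j * ((NZ k (Jsel j) : ℤ) : ℂ))
        = ∑ k, ∑ j, c j * (((CZ i k : ℤ) : ℂ) * ((NZ k (Jsel j) : ℤ) : ℂ)) := by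
          refine Finset.sum_congr rfl fun k _ => ?_
          rw [Finset.mul_sum]
          exact Finset.sum_congr rfl fun j _ => by ring
      _ = ∑ j, ∑ k, c j * (((CZ i k : ℤ) : ℂ) * ((NZ k (Jsel j) : ℤ) : ℂ)) :=
          Finset.sum_comm
      _ = ∑ j, c j * ((∑ k, CZ i k * NZ k (Jsel j) : ℤ) : ℂ) := by
          refine Finset.sum_congr rfl fun j _ => ?_
          rw [← Finset.mul_sum]
          congr 1
          push_cast
          rfl
      _ = ∑ j, c j * (if i = j then ((mc i : ℤ) : ℂ) else 0) := by
          refine Finset.sum_congr rfl fun j _ => ?_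
          rw [hCN i j]
          by_cases hij : i = j <;> simp [hij]
      _ = c i * ((mc i : ℤ) : ℂ) := by
          simp only [mul_ite, mul_zero]
          rw [Finset.sum_ite_eq Finset.univ i (fun j => c j * ((mc i : ℤ) : ℂ))]
          simp
  have h0 : ∑ k, ((CZ i k : ℤ) : ℂ) * (∑ j, c j * ((NZ k (Jsel j) : ℤ) : ℂ)) = 0 := by
    refine Finset.sum_eq_zero fun k _ => ?_
    rw [hg k, mul_zero]
  rw [key] at h0
  rcases mul_eq_zero.1 h0 with h | h
  · exact h
  · exact absurd h (by exact_mod_cast hmc i)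

end Lam3

open Lam3 in
set_option synthInstance.maxHeartbeats 400000 in
set_option maxHeartbeats 1000000 in
theorem lam3_fixed_dim_of_subregular_unipotent :
    Module.finrank ℂ (lam3Fixed (bidiag 1 ![1, 1, 0, 1, 0, 1, 0])) = 13 := by
  classical
  have hgoal : lam3Fixed Xc =
      Submodule.span ℂ (Set.range w) ⊓ LinearMap.ker Tm := by
    rw [lam3Fixed, hspan]; rfl
  rw [show lam3Fixed (bidiag 1 ![1, 1, 0, 1, 0, 1, 0]) = lam3Fixed Xc from rfl, hgoal]
  haveI hfd : FiniteDimensional ℂ (Submodule.span ℂ (Set.range w)) :=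
    FiniteDimensional.span_of_finite ℂ (Set.finite_range w)
  let Tr : Submodule.span ℂ (Set.range w) →ₗ[ℂ] ExteriorAlgebra ℂ V7 :=
    Tm.domRestrict (Submodule.span ℂ (Set.range w))
  have hker : Submodule.map (Submodule.span ℂ (Set.range w)).subtype
      (LinearMap.ker Tr) = Submodule.span ℂ (Set.range w) ⊓ LinearMap.ker Tm := by
    have h1 : LinearMap.ker Tr =
        Submodule.comap (Submodule.span ℂ (Set.range w)).subtype (LinearMap.ker Tm) :=
      LinearMap.ker_comp _ _
    rw [h1, Submodule.map_comap_subtype]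
  have hfix : Module.finrank ℂ (Submodule.span ℂ (Set.range w) ⊓ LinearMap.ker Tm :
      Submodule ℂ (ExteriorAlgebra ℂ V7)) = Module.finrank ℂ (LinearMap.ker Tr) := by
    rw [← hker, Submodule.finrank_map_subtype_eq]
  have hrn : Module.finrank ℂ (LinearMap.range Tr) + Module.finrank ℂ (LinearMap.ker Tr) =
      Module.finrank ℂ (Submodule.span ℂ (Set.range w)) :=
    LinearMap.finrank_range_add_finrank_ker Tr
  have h35 : Module.finrank ℂ (Submodule.span ℂ (Set.range w)) = 35 := by
    rw [finrank_span_eq_card lin_indep_w, Fintype.card_fin]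
  have hz13 : 13 ≤ Module.finrank ℂ (LinearMap.ker Tr) := by
    let zz : Fin 13 → LinearMap.ker Tr := fun i =>
      ⟨⟨z i, z_mem i⟩, by
        rw [LinearMap.mem_ker]
        show Tm (z i) = 0
        exact Tm_z i⟩
    have hli : LinearIndependent ℂ zz := by
      refine LinearIndependent.of_comp
        ((Submodule.span ℂ (Set.range w)).subtype.comp (LinearMap.ker Tr).subtype) ?_
      exact (show ((Submodule.span ℂ (Set.range w)).subtype.comp
          (LinearMap.ker Tr).subtype) ∘ zz = z from rfl) ▸ z_indep
    simpa using hli.fintype_card_le_finrank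
  have hy22 : 22 ≤ Module.finrank ℂ (LinearMap.range Tr) := by
    have hymem : ∀ j, y j ∈ LinearMap.range Tr := fun j =>
      ⟨⟨w (Jsel j), Submodule.subset_span ⟨_, rfl⟩⟩, rfl⟩
    let yy : Fin 22 → LinearMap.range Tr := fun j => ⟨y j, hymem j⟩
    have hli : LinearIndependent ℂ yy := by
      refine LinearIndependent.of_comp (LinearMap.range Tr).subtype ?_
      exact (show (LinearMap.range Tr).subtype ∘ yy = y from rfl) ▸ y_indep
    simpa using hli.fintype_card_le_finrank
  rw [hfix]
  omega

end
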